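/- arXiv:1004.5494 — 3 statements merged into one kernel-verified Lean document; each statement's English description precedes it below -/
import Mathlib

section
/- Let Ω ⊆ ℝ² be open and W ⊆ ℝ² be open, and let P ∈ ∂Ω ∩ W. Assume that ∂Ω ∩ W is a one-dimensional C¹ submanifold of ℝ². Let φ : ℝ² → ℝ be continuously differentiable on W with φ = 0 at every point of ∂Ω ∩ W. If fderiv φ P ≠ 0, then P does not belong to the closure of {x ∈ Ω : φ(x) = 0}; equivalently, there is an open neighborhood U of P such that φ(x) ≠ 0 for every x ∈ U ∩ Ω. -/
/-! Let `γ` parametrize `∂Ω ∩ W` near `P = γ 0` with `v = γ' 0 ≠ 0`, and pick a linear functional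
`M` with `M v ≠ 0`. Since `φ ∘ γ = 0`, `dφ(P)` kills `v`; being nonzero it is independent of `M`,
so `F = (φ, M)` has invertible derivative at `P` and is injective near `P`. As `M ∘ γ` has
nonzero derivative at `0`, it covers a neighbourhood of `M P`. Hence every zero `x` of `φ` near
`P` satisfies `F x = F (γ t)` for some small `t`, so `x = γ t` lies on `∂Ω`, which the open set
`Ω` does not meet. -/

/-- `M` is a one-dimensional C¹ submanifold of `ℝ²`: near each of its points it is
the image of a regular C¹ local parametrization. -/
def IsC1Submanifold1D (M : Set (ℝ × ℝ)) : Prop :=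
  ∀ Q ∈ M, ∃ (U : Set (ℝ × ℝ)) (γ : ℝ → ℝ × ℝ) (ε : ℝ),
    0 < ε ∧ IsOpen U ∧ Q ∈ U ∧
    ContDiffOn ℝ 1 γ (Set.Ioo (-ε) ε) ∧ γ 0 = Q ∧
    deriv γ 0 ≠ 0 ∧ γ '' Set.Ioo (-ε) ε = M ∩ U

open Set Filter Topology Module

theorem Module.Dual.injective_prod_of_finrank_eq_two {K V : Type*} [DivisionRing K]
    [AddCommGroup V] [Module K V] (hV : finrank K V = 2) {L M : Dual K V} (hL : L ≠ 0)
    {v : V} (hLv : L v = 0) (hMv : M v ≠ 0) : Function.Injective (L.prod M) := by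
  have : FiniteDimensional K V := .of_finrank_pos (by omega)
  have hker : finrank K (LinearMap.ker L) = 1 := by
    have := L.finrank_ker_add_one_of_ne_zero hL
    omega
  have hv : (⟨v, hLv⟩ : LinearMap.ker L) ≠ 0 := by
    intro h
    exact hMv (by simpa using congrArg (M ∘ Subtype.val) h)
  rw [← LinearMap.ker_eq_bot, LinearMap.ker_prod, eq_bot_iff]
  rintro x ⟨hLx, hMx⟩
  obtain ⟨c, hc⟩ := (finrank_eq_one_iff_of_nonzero' _ hv).1 hker ⟨x, hLx⟩
  have hx : c • v = x := congrArg Subtype.val hc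
  have hc0 : c = 0 := by
    simpa [← hx, hMv] using (hMx : M x = 0)
  simp [← hx, hc0]

theorem HasFDerivAt.apply_eq_zero_of_eventually_comp_eq {𝕜 E F : Type*}
    [NontriviallyNormedField 𝕜] [NormedAddCommGroup E] [NormedSpace 𝕜 E] [NormedAddCommGroup F]
    [NormedSpace 𝕜 F] {φ : E → F} {L : E →L[𝕜] F} {γ : 𝕜 → E} {v : E} {t₀ : 𝕜} {c : F}
    (hφ : HasFDerivAt φ L (γ t₀)) (hγ : HasDerivAt γ v t₀) (hφγ : ∀ᶠ t in 𝓝 t₀, φ (γ t) = c) :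
    L v = 0 :=
  (hφ.comp_hasDerivAt t₀ hγ).unique ((hasDerivAt_const t₀ c).congr_of_eventuallyEq hφγ)

theorem HasStrictFDerivAt.eventually_mem_image_of_eventually_comp_eq_zero {𝕜 E : Type*}
    [RCLike 𝕜] [NormedAddCommGroup E] [NormedSpace 𝕜 E] (hE : finrank 𝕜 E = 2) {φ : E → 𝕜}
    {L : E →L[𝕜] 𝕜} {P : E} {γ : 𝕜 → E} {v : E} {t₀ : 𝕜} {s : Set 𝕜}
    (hφ : HasStrictFDerivAt φ L P) (hL : L ≠ 0) (hγ : HasStrictDerivAt γ v t₀) (hv : v ≠ 0)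
    (hγP : γ t₀ = P) (hφγ : ∀ᶠ t in 𝓝 t₀, φ (γ t) = 0) (hs : s ∈ 𝓝 t₀) :
    ∀ᶠ x in 𝓝 P, φ x = 0 → x ∈ γ '' s := by
  have : FiniteDimensional 𝕜 E := .of_finrank_pos (by omega)
  have : CompleteSpace E := FiniteDimensional.complete 𝕜 E
  subst hγP
  obtain ⟨M, -, hMv⟩ := exists_dual_vector 𝕜 v (norm_ne_zero_iff.2 hv)
  have hMv : M v ≠ 0 := by simpa [hMv] using hv
  have hLv : L v = 0 := hφ.hasFDerivAt.apply_eq_zero_of_eventually_comp_eq hγ.hasDerivAt hφγ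
  have hinj : Function.Injective (L.prod M) :=
    Dual.injective_prod_of_finrank_eq_two hE (L := (L : E →ₗ[𝕜] 𝕜))
      (fun h ↦ hL (ContinuousLinearMap.coe_injective h)) hLv hMv
  let T : E ≃L[𝕜] 𝕜 × 𝕜 :=
    (LinearMap.linearEquivOfInjective (L.prod M : E →ₗ[𝕜] 𝕜 × 𝕜) hinj
      (by simp [hE])).toContinuousLinearEquiv
  have hF : HasStrictFDerivAt (fun x ↦ (φ x, M x)) (T : E →L[𝕜] 𝕜 × 𝕜) (γ t₀) :=
    hφ.prodMk M.hasStrictFDerivAt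
  have hMγ : HasStrictDerivAt (M ∘ γ) (M v) t₀ := M.hasStrictFDerivAt.comp_hasStrictDerivAt t₀ hγ
  have hs' : s ∩ {t | φ (γ t) = 0} ∩ γ ⁻¹' {x | hF.localInverse _ _ _ (φ x, M x) = x} ∈ 𝓝 t₀ :=
    inter_mem (inter_mem hs hφγ)
      (hγ.hasDerivAt.continuousAt.preimage_mem_nhds hF.eventually_left_inverse)
  have himage : M ∘ γ '' _ ∈ 𝓝 (M (γ t₀)) := hMγ.map_nhds_eq hMv ▸ image_mem_map hs'
  filter_upwards [hF.eventually_left_inverse, M.continuous.continuousAt.preimage_mem_nhds himage]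
    with x hx ⟨t, ⟨⟨ht, hφt⟩, hγt⟩, hMt⟩ hφx
  refine ⟨t, ht, ?_⟩
  have hFt : (φ (γ t), M (γ t)) = (φ x, M x) := Prod.ext (hφt.trans hφx.symm) hMt
  exact hγt.symm.trans ((congrArg _ hFt).trans hx)

theorem nonvanishing_normal_derivative_implies_not_in_nodal_set
    (Ω W : Set (ℝ × ℝ)) (hΩ : IsOpen Ω) (hW : IsOpen W)
    (P : ℝ × ℝ) (hP : P ∈ frontier Ω ∩ W)
    (hman : IsC1Submanifold1D (frontier Ω ∩ W))
    (φ : ℝ × ℝ → ℝ) (hφ : ContDiffOn ℝ 1 φ W)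
    (hzero : ∀ x ∈ frontier Ω ∩ W, φ x = 0)
    (hder : fderiv ℝ φ P ≠ 0) :
    P ∉ closure {x ∈ Ω | φ x = 0} ∧
      ∃ U : Set (ℝ × ℝ), IsOpen U ∧ P ∈ U ∧ ∀ x ∈ U ∩ Ω, φ x ≠ 0 := by
  obtain ⟨U, γ, ε, hε, -, -, hγ, hγP, hγ', himage⟩ := hman P hP
  have hIoo : Ioo (-ε) ε ∈ 𝓝 (0 : ℝ) := Ioo_mem_nhds (neg_neg_iff_pos.2 hε) hε
  have hγ_frontier : γ '' Ioo (-ε) ε ⊆ frontier Ω ∩ W := himage ▸ inter_subset_left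
  have hφγ : ∀ᶠ t in 𝓝 (0 : ℝ), φ (γ t) = 0 :=
    eventually_of_mem hIoo fun t ht ↦ hzero _ (hγ_frontier (mem_image_of_mem γ ht))
  have hnodal : ∀ᶠ x in 𝓝 P, φ x = 0 → x ∈ γ '' Ioo (-ε) ε :=
    ((hφ.contDiffAt (hW.mem_nhds hP.2)).hasStrictFDerivAt one_ne_zero
      ).eventually_mem_image_of_eventually_comp_eq_zero (by simp) hder
      ((hγ.contDiffAt hIoo).hasStrictDerivAt one_ne_zero) hγ' hγP hφγ hIoo
  have hkey : ∀ᶠ x in 𝓝 P, x ∈ Ω → φ x ≠ 0 := hnodal.mono fun x hx hxΩ hφx ↦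
    (hΩ.frontier_eq ▸ (hγ_frontier (hx hφx)).1).2 hxΩ
  refine ⟨?_, ?_⟩
  · rw [mem_closure_iff_frequently, not_frequently]
    exact hkey.mono fun x hx ⟨hxΩ, hφx⟩ ↦ hx hxΩ hφx
  · obtain ⟨U, hU, hUopen, hPU⟩ := eventually_nhds_iff.1 hkey
    exact ⟨U, hUopen, hPU, fun x ⟨hxU, hxΩ⟩ ↦ hU x hxU hxΩ⟩
end

section
/- Let Ω ⊆ ℝ² be open and bounded, let λ ≥ 0 be a real number, and let P ∈ ∂Ω satisfy the interior ball condition: there exists an open ball B ⊆ Ω with P ∈ ∂B. Let φ : ℝ² → ℝ be continuously differentiable on an open neighborhood of P and twice continuously differentiable on Ω, with Δφ(x) + λ·φ(x) = 0 for all x ∈ Ω and φ(P) = 0. If P does not belong to the closure of {x ∈ Ω : φ(x) = 0}, then fderiv φ P ≠ 0. -/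
/-- Partial derivative in the first coordinate direction. -/
noncomputable def pd1 (f : ℝ × ℝ → ℝ) (p : ℝ × ℝ) : ℝ := fderiv ℝ f p (1, 0)

/-- Partial derivative in the second coordinate direction. -/
noncomputable def pd2 (f : ℝ × ℝ → ℝ) (p : ℝ × ℝ) : ℝ := fderiv ℝ f p (0, 1)

/-- The Laplacian `Δφ = ∂²φ/∂x² + ∂²φ/∂y²`. -/
noncomputable def lap (f : ℝ × ℝ → ℝ) (p : ℝ × ℝ) : ℝ :=
  pd1 (pd1 f) p + pd2 (pd2 f) p

/-- `P` satisfies the interior ball condition for `Ω`: there is an open (Euclidean)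
ball contained in `Ω` whose boundary contains `P`. -/
def InteriorBall (Ω : Set (ℝ × ℝ)) (P : ℝ × ℝ) : Prop :=
  ∃ (c : ℝ × ℝ) (ρ : ℝ), 0 < ρ ∧
    {x : ℝ × ℝ | (x.1 - c.1) ^ 2 + (x.2 - c.2) ^ 2 < ρ ^ 2} ⊆ Ω ∧
    (P.1 - c.1) ^ 2 + (P.2 - c.2) ^ 2 = ρ ^ 2

/-!
Hopf's boundary point argument. Near `P` the function `φ` has no zeros in `Ω`, so on the convex
set `W = B ∩ ball P ε` (with `B` the interior ball) it has a constant sign; replacing `φ` by `-φ`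
we may assume `φ > 0` on `W`, and then `Δφ = -λφ ≤ 0` there. Inside `W` pick a small disc `D`
of radius `r` touching `∂B` at `P` only. On the annulus `r/2 ≤ |x - z| ≤ r` compare `φ` with the
barrier `δ (exp (-α|x - z|²) - exp (-α r²))`: it is strictly subharmonic there, vanishes on `∂D`
and lies below `φ` on the inner circle, so by the minimum principle it lies below `φ` on the
whole annulus. Both vanish at `P`, hence the derivative of `φ` at `P` in the inward direction
`z - P` is at least that of the barrier, which is positive.
-/

open Real Filter Set Topology

theorem IsLocalMin.deriv_deriv_nonneg {f : ℝ → ℝ} {a : ℝ} (h : IsLocalMin f a)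
    (hc : ContinuousAt f a) : 0 ≤ deriv (deriv f) a := by
  -- if `f'' a < 0` then `a` is also a local maximum, so `f` is locally constant
  by_contra! hneg
  have hmax := isLocalMax_of_deriv_deriv_neg hneg h.deriv_eq_zero hc
  have hconst : f =ᶠ[𝓝 a] fun _ => f a := (h.and hmax).mono fun y hy => le_antisymm hy.2 hy.1
  rw [hconst.deriv.deriv_eq] at hneg
  simp at hneg

section SecondDerivative

variable {E F : Type*} [NormedAddCommGroup E] [NormedSpace ℝ E]
  [NormedAddCommGroup F] [NormedSpace ℝ F] {f g : E → F} {x : E}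

theorem ContDiffAt.differentiableAt_fderiv_apply (hf : ContDiffAt ℝ 2 f x) (e : E) :
    DifferentiableAt ℝ (fun y => fderiv ℝ f y e) x :=
  ((hf.fderiv_right (m := 1) le_rfl).differentiableAt one_ne_zero).clm_apply
    (differentiableAt_const e)

theorem ContDiffAt.eventually_differentiableAt (hf : ContDiffAt ℝ 2 f x) :
    ∀ᶠ y in 𝓝 x, DifferentiableAt ℝ f y :=
  (hf.eventually (by simp)).mono fun _ hy => hy.differentiableAt (by simp)

theorem fderiv_fderiv_apply_sub (hf : ContDiffAt ℝ 2 f x) (hg : ContDiffAt ℝ 2 g x)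
    (e e' : E) :
    fderiv ℝ (fun y => fderiv ℝ (fun y => f y - g y) y e) x e' =
      fderiv ℝ (fun y => fderiv ℝ f y e) x e' - fderiv ℝ (fun y => fderiv ℝ g y e) x e' := by
  have hsub : (fun y => fderiv ℝ (fun y => f y - g y) y e) =ᶠ[𝓝 x]
      fun y => fderiv ℝ f y e - fderiv ℝ g y e := by
    filter_upwards [hf.eventually_differentiableAt, hg.eventually_differentiableAt]
      with y hfy hgy
    rw [fderiv_fun_sub hfy hgy]
    rfl
  rw [hsub.fderiv_eq, fderiv_fun_sub (hf.differentiableAt_fderiv_apply e)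
    (hg.differentiableAt_fderiv_apply e)]
  rfl

theorem IsLocalMin.fderiv_fderiv_apply_nonneg {f : E → ℝ} (h : IsLocalMin f x)
    (hf : ContDiffAt ℝ 2 f x) (e : E) : 0 ≤ fderiv ℝ (fun y => fderiv ℝ f y e) x e := by
  set ℓ : ℝ → E := fun t => x + t • e
  have hℓ : ∀ t, HasDerivAt ℓ e t := fun t => by
    have := ((hasDerivAt_id t).smul_const e).const_add x
    rwa [one_smul] at this
  have hℓ0 : ℓ 0 = x := by simp [ℓ]
  have hℓx : Tendsto ℓ (𝓝 0) (𝓝 x) := hℓ0 ▸ (hℓ 0).continuousAt.tendsto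
  have hderiv : deriv (f ∘ ℓ) =ᶠ[𝓝 0] fun t => fderiv ℝ f (ℓ t) e := by
    filter_upwards [hℓx.eventually hf.eventually_differentiableAt] with t ht
    exact (ht.hasFDerivAt.comp_hasDerivAt t (hℓ t)).deriv
  have hsecond : deriv (deriv (f ∘ ℓ)) 0 = fderiv ℝ (fun y => fderiv ℝ f y e) x e := by
    have hd : HasFDerivAt (fun y => fderiv ℝ f y e)
        (fderiv ℝ (fun y => fderiv ℝ f y e) x) (ℓ 0) :=
      hℓ0 ▸ (hf.differentiableAt_fderiv_apply e).hasFDerivAt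
    rw [hderiv.deriv_eq]
    exact (hd.comp_hasDerivAt 0 (hℓ 0)).deriv
  rw [← hsecond]
  exact (hℓ0 ▸ h).comp_continuous (hℓ 0).continuousAt |>.deriv_deriv_nonneg
    ((hℓ0 ▸ hf.continuousAt).comp (hℓ 0).continuousAt)

end SecondDerivative

theorem lap_def (f : ℝ × ℝ → ℝ) (x : ℝ × ℝ) :
    lap f x = fderiv ℝ (fun y => fderiv ℝ f y (1, 0)) x (1, 0) +
      fderiv ℝ (fun y => fderiv ℝ f y (0, 1)) x (0, 1) := rfl

theorem IsLocalMin.lap_nonneg {f : ℝ × ℝ → ℝ} {x : ℝ × ℝ} (h : IsLocalMin f x)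
    (hf : ContDiffAt ℝ 2 f x) : 0 ≤ lap f x :=
  add_nonneg (h.fderiv_fderiv_apply_nonneg hf _) (h.fderiv_fderiv_apply_nonneg hf _)

theorem lap_sub {f g : ℝ × ℝ → ℝ} {x : ℝ × ℝ} (hf : ContDiffAt ℝ 2 f x)
    (hg : ContDiffAt ℝ 2 g x) : lap (fun y => f y - g y) x = lap f x - lap g x := by
  rw [lap_def, lap_def, lap_def, fderiv_fderiv_apply_sub hf hg, fderiv_fderiv_apply_sub hf hg]
  ring

theorem lap_neg (f : ℝ × ℝ → ℝ) (x : ℝ × ℝ) : lap (fun y => -f y) x = -lap f x := by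
  simp only [lap_def, fderiv_fun_neg, FunLike.coe_neg, Pi.neg_apply]
  ring

def sqDist (x c : ℝ × ℝ) : ℝ := (x.1 - c.1) ^ 2 + (x.2 - c.2) ^ 2

def disc (c : ℝ × ℝ) (r : ℝ) : Set (ℝ × ℝ) := {x | sqDist x c < r ^ 2}

def closedDisc (c : ℝ × ℝ) (r : ℝ) : Set (ℝ × ℝ) := {x | sqDist x c ≤ r ^ 2}

@[simp] theorem mem_disc {c x : ℝ × ℝ} {r : ℝ} : x ∈ disc c r ↔ sqDist x c < r ^ 2 := Iff.rfl

@[simp] theorem mem_closedDisc {c x : ℝ × ℝ} {r : ℝ} : x ∈ closedDisc c r ↔ sqDist x c ≤ r ^ 2 :=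
  Iff.rfl

theorem disc_subset_closedDisc (c : ℝ × ℝ) (r : ℝ) : disc c r ⊆ closedDisc c r :=
  fun _ hx => mem_closedDisc.2 (mem_disc.1 hx).le

theorem disc_subset_closedDisc_sdiff {z P : ℝ × ℝ} {r : ℝ} (hP : sqDist P z = r ^ 2) :
    disc z r ⊆ closedDisc z r \ {P} := fun x hx =>
  ⟨disc_subset_closedDisc z r hx, by rintro rfl; exact (mem_disc.1 hx).ne hP⟩

theorem continuous_sqDist (c : ℝ × ℝ) : Continuous fun x => sqDist x c := by
  unfold sqDist; fun_prop

theorem dist_sq_le_sqDist (x c : ℝ × ℝ) : dist x c ^ 2 ≤ sqDist x c := by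
  rw [Prod.dist_eq, Real.dist_eq, Real.dist_eq, sqDist]
  rcases max_choice |x.1 - c.1| |x.2 - c.2| with h | h <;> rw [h, sq_abs] <;>
    nlinarith [sq_nonneg (x.1 - c.1), sq_nonneg (x.2 - c.2)]

theorem sqDist_pos {x c : ℝ × ℝ} (h : x ≠ c) : 0 < sqDist x c :=
  (pow_pos (dist_pos.2 h) 2).trans_le (dist_sq_le_sqDist x c)

theorem closedDisc_subset_closedBall (c : ℝ × ℝ) (r : ℝ) :
    closedDisc c r ⊆ Metric.closedBall c |r| := fun x hx =>
  (pow_le_pow_iff_left₀ dist_nonneg (abs_nonneg r) two_ne_zero).mp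
    ((dist_sq_le_sqDist x c).trans (hx.trans_eq (sq_abs r).symm))

theorem isClosed_closedDisc (c : ℝ × ℝ) (r : ℝ) : IsClosed (closedDisc c r) :=
  isClosed_le (continuous_sqDist c) continuous_const

theorem isCompact_closedDisc (c : ℝ × ℝ) (r : ℝ) : IsCompact (closedDisc c r) :=
  Metric.isCompact_of_isClosed_isBounded (isClosed_closedDisc c r)
    (Metric.isBounded_closedBall.subset (closedDisc_subset_closedBall c r))

theorem hasFDerivAt_sqDist (x c : ℝ × ℝ) :
    HasFDerivAt (fun y => sqDist y c)
      ((2 * (x.1 - c.1)) • ContinuousLinearMap.fst ℝ ℝ ℝ +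
        (2 * (x.2 - c.2)) • ContinuousLinearMap.snd ℝ ℝ ℝ) x := by
  have h1 : HasFDerivAt (fun y : ℝ × ℝ => (y.1 - c.1) ^ 2)
      ((2 * (x.1 - c.1)) • ContinuousLinearMap.fst ℝ ℝ ℝ) x := by
    simpa using (hasFDerivAt_fst.sub_const c.1).pow 2
  have h2 : HasFDerivAt (fun y : ℝ × ℝ => (y.2 - c.2) ^ 2)
      ((2 * (x.2 - c.2)) • ContinuousLinearMap.snd ℝ ℝ ℝ) x := by
    simpa using (hasFDerivAt_snd.sub_const c.2).pow 2
  exact h1.add h2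

theorem isOpen_disc (c : ℝ × ℝ) (r : ℝ) : IsOpen (disc c r) :=
  isOpen_lt (continuous_sqDist c) continuous_const

theorem convex_disc (c : ℝ × ℝ) (r : ℝ) : Convex ℝ (disc c r) := by
  refine convex_iff_pairwise_pos.mpr fun x hx y hy _ s t hs ht hst => ?_
  obtain rfl : t = 1 - s := by linarith
  simp only [disc, sqDist, mem_ofPred_eq, Prod.fst_add, Prod.snd_add, Prod.smul_fst,
    Prod.smul_snd, smul_eq_mul] at *
  nlinarith [mul_pos hs (sub_pos.2 hx), mul_pos ht (sub_pos.2 hy),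
    mul_nonneg (mul_nonneg hs.le ht.le) (sq_nonneg (x.1 - y.1)),
    mul_nonneg (mul_nonneg hs.le ht.le) (sq_nonneg (x.2 - y.2))]

theorem sqDist_add_smul_sub (P z : ℝ × ℝ) (t : ℝ) :
    sqDist (P + t • (z - P)) z = (1 - t) ^ 2 * sqDist P z := by
  simp only [sqDist, Prod.fst_add, Prod.snd_add, Prod.smul_fst, Prod.smul_snd, Prod.fst_sub,
    Prod.snd_sub, smul_eq_mul]
  ring

noncomputable def hopfBarrier (z : ℝ × ℝ) (α δ r : ℝ) (x : ℝ × ℝ) : ℝ :=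
  δ * (exp (-α * sqDist x z) - exp (-α * r ^ 2))

section HopfBarrier

variable (z : ℝ × ℝ) (α δ r : ℝ)

theorem contDiff_hopfBarrier : ContDiff ℝ 2 (hopfBarrier z α δ r) := by
  unfold hopfBarrier sqDist; fun_prop

theorem hasFDerivAt_hopfBarrier (x : ℝ × ℝ) :
    HasFDerivAt (hopfBarrier z α δ r)
      ((-2 * α * δ * exp (-α * sqDist x z)) •
        ((x.1 - z.1) • ContinuousLinearMap.fst ℝ ℝ ℝ +
          (x.2 - z.2) • ContinuousLinearMap.snd ℝ ℝ ℝ)) x := by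
  refine ((((hasFDerivAt_sqDist x z).const_mul (-α)).exp.sub_const _).const_mul δ).congr_fderiv ?_
  ext <;> simp <;> ring

theorem fderiv_hopfBarrier_apply (x e : ℝ × ℝ) :
    fderiv ℝ (hopfBarrier z α δ r) x e =
      -2 * α * δ * ((x.1 - z.1) * e.1 + (x.2 - z.2) * e.2) * exp (-α * sqDist x z) := by
  rw [(hasFDerivAt_hopfBarrier z α δ r x).fderiv]
  simp only [add_apply, smul_apply, ContinuousLinearMap.coe_fst', ContinuousLinearMap.coe_snd',
    smul_eq_mul]
  ring

theorem fderiv_fderiv_hopfBarrier_apply (x e : ℝ × ℝ) :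
    fderiv ℝ (fun y => fderiv ℝ (hopfBarrier z α δ r) y e) x e =
      2 * α * δ * (2 * α * ((x.1 - z.1) * e.1 + (x.2 - z.2) * e.2) ^ 2 - (e.1 ^ 2 + e.2 ^ 2)) *
        exp (-α * sqDist x z) := by
  simp only [fderiv_hopfBarrier_apply]
  have hlin : HasFDerivAt (fun y : ℝ × ℝ => -2 * α * δ * ((y.1 - z.1) * e.1 + (y.2 - z.2) * e.2))
      ((-2 * α * δ) • (e.1 • ContinuousLinearMap.fst ℝ ℝ ℝ +
        e.2 • ContinuousLinearMap.snd ℝ ℝ ℝ)) x := by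
    refine (((hasFDerivAt_fst.sub_const z.1).mul_const e.1).add
      ((hasFDerivAt_snd.sub_const z.2).mul_const e.2)).const_mul _ |>.congr_fderiv ?_
    ext <;> simp
  rw [(hlin.fun_mul ((hasFDerivAt_sqDist x z).const_mul (-α)).exp).fderiv]
  simp only [add_apply, smul_apply, ContinuousLinearMap.coe_fst', ContinuousLinearMap.coe_snd',
    smul_eq_mul]
  ring

theorem lap_hopfBarrier (x : ℝ × ℝ) :
    lap (hopfBarrier z α δ r) x = 4 * α * δ * (α * sqDist x z - 1) * exp (-α * sqDist x z) := by
  rw [lap_def, fderiv_fderiv_hopfBarrier_apply, fderiv_fderiv_hopfBarrier_apply, sqDist]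
  ring

end HopfBarrier

theorem hopfBarrier_eq_zero {z x : ℝ × ℝ} {r : ℝ} (α δ : ℝ) (hx : sqDist x z = r ^ 2) :
    hopfBarrier z α δ r x = 0 := by
  simp [hopfBarrier, hx]

theorem lap_hopfBarrier_pos {z x : ℝ × ℝ} {α δ : ℝ} (r : ℝ) (hα : 0 < α) (hδ : 0 < δ)
    (hx : 1 < α * sqDist x z) : 0 < lap (hopfBarrier z α δ r) x := by
  rw [lap_hopfBarrier]
  have := sub_pos.2 hx
  positivity

theorem fderiv_hopfBarrier_apply_pos {z P : ℝ × ℝ} {α δ : ℝ} (r : ℝ) (hα : 0 < α) (hδ : 0 < δ)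
    (hP : 0 < sqDist P z) : 0 < fderiv ℝ (hopfBarrier z α δ r) P (z - P) := by
  have hinner : (P.1 - z.1) * (z - P).1 + (P.2 - z.2) * (z - P).2 = -sqDist P z := by
    simp only [sqDist, Prod.fst_sub, Prod.snd_sub]; ring
  rw [fderiv_hopfBarrier_apply, hinner]
  have := exp_pos (-α * sqDist P z)
  nlinarith [mul_pos (mul_pos (mul_pos hα hδ) hP) this]

theorem IsCompact.nonneg_of_lap_neg {v : ℝ × ℝ → ℝ} {K U : Set (ℝ × ℝ)} (hK : IsCompact K)
    (hv : ContinuousOn v K) (hU : IsOpen U) (hUK : U ⊆ K)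
    (hlap : ∀ x ∈ U, ContDiffAt ℝ 2 v x ∧ lap v x < 0) (hbdry : ∀ x ∈ K \ U, 0 ≤ v x)
    {x : ℝ × ℝ} (hx : x ∈ K) : 0 ≤ v x := by
  obtain ⟨x₀, hx₀K, hmin⟩ := hK.exists_isMinOn ⟨x, hx⟩ hv
  refine le_trans ?_ (hmin hx)
  by_cases hx₀U : x₀ ∈ U
  · obtain ⟨hC2, hneg⟩ := hlap x₀ hx₀U
    have hloc := hmin.isLocalMin (mem_of_superset (hU.mem_nhds hx₀U) hUK)
    exact absurd (hloc.lap_nonneg hC2) hneg.not_ge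
  · exact hbdry x₀ ⟨hx₀K, hx₀U⟩

theorem hopfBarrier_le_of_le_on_boundary {φ : ℝ × ℝ → ℝ} {z : ℝ × ℝ} {r s α δ : ℝ}
    (hα : 0 < α) (hδ : 0 < δ) (hαs : 1 < α * s ^ 2) (hcont : ContinuousOn φ (closedDisc z r))
    (hC2 : ∀ x ∈ disc z r, ContDiffAt ℝ 2 φ x) (hsuper : ∀ x ∈ disc z r, lap φ x ≤ 0)
    (houter : ∀ x, sqDist x z = r ^ 2 → 0 ≤ φ x)
    (hinner : ∀ x, sqDist x z = s ^ 2 → hopfBarrier z α δ r x ≤ φ x)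
    {x : ℝ × ℝ} (hx : x ∈ closedDisc z r \ disc z s) : hopfBarrier z α δ r x ≤ φ x := by
  have hb := contDiff_hopfBarrier z α δ r
  refine sub_nonneg.1 <| ((isCompact_closedDisc z r).diff (isOpen_disc z s)).nonneg_of_lap_neg
    (v := fun y => φ y - hopfBarrier z α δ r y) (U := disc z r \ closedDisc z s)
    ((hcont.mono sdiff_subset).sub hb.continuous.continuousOn)
    ((isOpen_disc z r).sdiff (isClosed_closedDisc z s))
    (sdiff_subset_sdiff (disc_subset_closedDisc z r) (disc_subset_closedDisc z s)) ?_ ?_ hx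
  · rintro y ⟨hyr, hys⟩
    refine ⟨(hC2 y hyr).sub hb.contDiffAt, ?_⟩
    rw [lap_sub (hC2 y hyr) hb.contDiffAt]
    have : 1 < α * sqDist y z :=
      hαs.trans_le <| mul_le_mul_of_nonneg_left (not_le.1 hys).le hα.le
    linarith [hsuper y hyr, lap_hopfBarrier_pos r hα hδ this]
  · rintro y ⟨⟨hyr, hys⟩, hyU⟩
    simp only [mem_disc, mem_closedDisc, Set.mem_sdiff, not_and, not_not, not_lt] at hyr hys hyU
    by_cases hyr' : sqDist y z < r ^ 2
    · exact sub_nonneg.2 <| hinner y (le_antisymm (hyU hyr') hys)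
    · rw [hopfBarrier_eq_zero α δ (le_antisymm hyr (not_lt.1 hyr')), sub_zero]
      exact houter y (le_antisymm hyr (not_lt.1 hyr'))

theorem sub_mem_posTangentConeAt_annulus {z P : ℝ × ℝ} {r s : ℝ} (hs : 0 ≤ s) (hsr : s < r)
    (hP : sqDist P z = r ^ 2) : z - P ∈ posTangentConeAt (closedDisc z r \ disc z s) P := by
  have hr : 0 < r := hs.trans_lt hsr
  refine mem_posTangentConeAt_of_frequently_mem (Eventually.frequently ?_)
  filter_upwards [Ioo_mem_nhdsGT (div_pos (sub_pos.2 hsr) hr)] with t ⟨ht0, ht1⟩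
  have hst : s ≤ (1 - t) * r := by
    rw [lt_div_iff₀ hr] at ht1; linarith
  simp only [Set.mem_sdiff, mem_closedDisc, mem_disc, not_lt, sqDist_add_smul_sub, hP]
  constructor
  · nlinarith [mul_pos ht0 hr]
  · nlinarith [mul_le_mul hst hst hs (hs.trans hst)]

theorem hopf_lemma_disc {φ : ℝ × ℝ → ℝ} {z P : ℝ × ℝ} {r : ℝ} (hr : 0 < r)
    (hP : sqDist P z = r ^ 2) (hφP : φ P = 0) (hdiff : DifferentiableAt ℝ φ P)
    (hC2 : ∀ x ∈ closedDisc z r \ {P}, ContDiffAt ℝ 2 φ x)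
    (hsuper : ∀ x ∈ closedDisc z r \ {P}, lap φ x ≤ 0)
    (hpos : ∀ x ∈ closedDisc z r \ {P}, 0 < φ x) :
    0 < fderiv ℝ φ P (z - P) := by
  have hcont : ContinuousOn φ (closedDisc z r) := fun x hx => by
    rcases eq_or_ne x P with rfl | hxP
    · exact hdiff.continuousAt.continuousWithinAt
    · exact (hC2 x ⟨hx, hxP⟩).continuousAt.continuousWithinAt
  have hdisc := disc_subset_closedDisc_sdiff hP
  have hcircle : {x | sqDist x z = (r / 2) ^ 2} ⊆ disc z r := fun x (hx : _ = _) => by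
    rw [mem_disc, hx]; nlinarith
  have hS : IsCompact {x | sqDist x z = (r / 2) ^ 2} :=
    (isCompact_closedDisc z (r / 2)).of_isClosed_subset
      (isClosed_eq (continuous_sqDist z) continuous_const) fun x hx => le_of_eq hx
  obtain ⟨m, hm, hmS⟩ := hS.exists_forall_le'
    (hcont.mono ((hcircle.trans hdisc).trans sdiff_subset)) fun x hx => hpos x (hdisc (hcircle hx))
  -- `α` makes the barrier strictly subharmonic on the annulus, `δ` makes it `m` on the inner circle
  set α := 8 / r ^ 2
  set C := exp (-α * (r / 2) ^ 2) - exp (-α * r ^ 2)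
  have hα : 0 < α := by positivity
  have hαs : 1 < α * (r / 2) ^ 2 := by
    simp only [α]; field_simp; norm_num
  have hC : 0 < C := sub_pos.2 <| exp_lt_exp.2 <| by nlinarith
  set δ := m / C
  have hδ : 0 < δ := div_pos hm hC
  have houter : ∀ x, sqDist x z = r ^ 2 → 0 ≤ φ x := fun x hx => by
    rcases eq_or_ne x P with rfl | hxP
    · exact hφP.ge
    · exact (hpos x ⟨hx.le, hxP⟩).le
  have hinner : ∀ x, sqDist x z = (r / 2) ^ 2 → hopfBarrier z α δ r x ≤ φ x := fun x hx => by
    rw [hopfBarrier, hx, div_mul_cancel₀ m hC.ne']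
    exact hmS x hx
  have hmin : IsMinOn (fun x => φ x - hopfBarrier z α δ r x) (closedDisc z r \ disc z (r / 2)) P :=
    isMinOn_iff.2 fun x hx => by
      simpa [hφP, hopfBarrier_eq_zero α δ hP] using
        hopfBarrier_le_of_le_on_boundary hα hδ hαs hcont (fun x hx => hC2 x (hdisc hx))
          (fun x hx => hsuper x (hdisc hx)) houter hinner hx
  have hderiv := hmin.localize.hasFDerivWithinAt_nonneg
    (hdiff.hasFDerivAt.sub (hasFDerivAt_hopfBarrier z α δ r P)).hasFDerivWithinAt
    (sub_mem_posTangentConeAt_annulus (by positivity) (by linarith) hP)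
  have hb := fderiv_hopfBarrier_apply_pos r hα hδ (hP ▸ by positivity : 0 < sqDist P z)
  rw [(hasFDerivAt_hopfBarrier z α δ r P).fderiv] at hb
  rw [sub_apply] at hderiv
  linarith

theorem exists_internally_tangent_disc {c P : ℝ × ℝ} {ρ ε : ℝ} (hρ : 0 < ρ)
    (hP : sqDist P c = ρ ^ 2) (hε : 0 < ε) :
    ∃ z r, 0 < r ∧ sqDist P z = r ^ 2 ∧ closedDisc z r \ {P} ⊆ disc c ρ ∩ Metric.ball P ε := by
  set τ := min (1 / 2) (ε / (4 * ρ))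
  have hτ0 : 0 < τ := lt_min (by norm_num) (by positivity)
  have hτ1 : τ ≤ 1 / 2 := min_le_left _ _
  have hτε : τ * ρ ≤ ε / 4 :=
    calc τ * ρ ≤ ε / (4 * ρ) * ρ := mul_le_mul_of_nonneg_right (min_le_right _ _) hρ.le
      _ = ε / 4 := by field_simp
  refine ⟨P + τ • (c - P), τ * ρ, by positivity, ?_, fun x ⟨hx, hxP⟩ => ?_⟩
  · simp only [sqDist, Prod.fst_add, Prod.snd_add, Prod.smul_fst, Prod.smul_snd, Prod.fst_sub,
      Prod.snd_sub, smul_eq_mul] at hP ⊢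
    linear_combination τ ^ 2 * hP
  have hxP := sqDist_pos (mem_singleton_iff.not.1 hxP)
  simp only [mem_closedDisc, sqDist, Prod.fst_add, Prod.snd_add, Prod.smul_fst, Prod.smul_snd,
    Prod.fst_sub, Prod.snd_sub, smul_eq_mul] at hx hP
  set w₁ := x.1 - (P.1 + τ * (c.1 - P.1))
  set w₂ := x.2 - (P.2 + τ * (c.2 - P.2))
  have hxPw : sqDist x P =
      w₁ ^ 2 + w₂ ^ 2 - 2 * τ * (w₁ * (P.1 - c.1) + w₂ * (P.2 - c.2)) + (τ * ρ) ^ 2 := by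
    simp only [sqDist, w₁, w₂]
    linear_combination τ ^ 2 * hP
  have hinner : w₁ * (P.1 - c.1) + w₂ * (P.2 - c.2) < τ * ρ ^ 2 := by
    by_contra! h
    nlinarith [mul_le_mul_of_nonneg_left h hτ0.le]
  refine ⟨?_, ?_⟩
  · have hxc : sqDist x c =
        w₁ ^ 2 + w₂ ^ 2 + 2 * (1 - τ) * (w₁ * (P.1 - c.1) + w₂ * (P.2 - c.2)) +
          ((1 - τ) * ρ) ^ 2 := by
      simp only [sqDist, w₁, w₂]
      linear_combination (1 - τ) ^ 2 * hP
    rw [mem_disc, hxc]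
    nlinarith [mul_lt_mul_of_pos_left hinner (by linarith : (0 : ℝ) < 1 - τ)]
  · have hxP' : 0 ≤ w₁ ^ 2 + w₂ ^ 2 + 2 * τ * (w₁ * (P.1 - c.1) + w₂ * (P.2 - c.2)) +
        (τ * ρ) ^ 2 := by
      have := add_nonneg (sq_nonneg (w₁ + τ * (P.1 - c.1))) (sq_nonneg (w₂ + τ * (P.2 - c.2)))
      linear_combination this + τ ^ 2 * hP
    have hsq : sqDist x P < ε ^ 2 := by
      nlinarith [mul_le_mul hτε hτε (by positivity) (by positivity)]
    exact (pow_lt_pow_iff_left₀ dist_nonneg hε.le two_ne_zero).1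
      ((dist_sq_le_sqDist x P).trans_lt hsq)

theorem fderiv_ne_zero_of_superharmonic_pos {ψ : ℝ × ℝ → ℝ} {c P : ℝ × ℝ} {ρ ε : ℝ}
    (hρ : 0 < ρ) (hP : sqDist P c = ρ ^ 2) (hε : 0 < ε) (hψP : ψ P = 0)
    (hdiff : DifferentiableAt ℝ ψ P) (hC2 : ContDiffOn ℝ 2 ψ (disc c ρ ∩ Metric.ball P ε))
    (hsuper : ∀ x ∈ disc c ρ ∩ Metric.ball P ε, lap ψ x ≤ 0)
    (hpos : ∀ x ∈ disc c ρ ∩ Metric.ball P ε, 0 < ψ x) : fderiv ℝ ψ P ≠ 0 := by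
  obtain ⟨z, r, hr, hPz, hsub⟩ := exists_internally_tangent_disc hρ hP hε
  have hW : IsOpen (disc c ρ ∩ Metric.ball P ε) := (isOpen_disc c ρ).inter Metric.isOpen_ball
  have hderiv := hopf_lemma_disc hr hPz hψP hdiff
    (fun x hx => hC2.contDiffAt (hW.mem_nhds (hsub hx))) (fun x hx => hsuper x (hsub hx))
    (fun x hx => hpos x (hsub hx))
  intro h
  simp [h] at hderiv

theorem hopf_nonzero_derivative_general
    (Ω : Set (ℝ × ℝ))
    (lam : ℝ) (hlam : 0 ≤ lam)
    (P : ℝ × ℝ) (hball : InteriorBall Ω P)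
    (φ : ℝ × ℝ → ℝ)
    (V : Set (ℝ × ℝ)) (hV : IsOpen V) (hPV : P ∈ V) (hφ1 : ContDiffOn ℝ 1 φ V)
    (hφ2 : ContDiffOn ℝ 2 φ Ω)
    (heq : ∀ x ∈ Ω, lap φ x + lam * φ x = 0)
    (hφP : φ P = 0)
    (hnod : P ∉ closure {x ∈ Ω | φ x = 0}) :
    fderiv ℝ φ P ≠ 0 := by
  obtain ⟨c, ρ, hρ, hB, hPc⟩ := hball
  obtain ⟨ε, hε, hεP⟩ := Metric.mem_nhds_iff.1 (isClosed_closure.isOpen_compl.mem_nhds hnod)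
  set W := disc c ρ ∩ Metric.ball P ε
  have hWΩ : W ⊆ Ω := fun x hx => hB hx.1
  have hne : ∀ x ∈ W, φ x ≠ 0 := fun x hx h0 => hεP hx.2 (subset_closure ⟨hWΩ hx, h0⟩)
  have hdiff : DifferentiableAt ℝ φ P :=
    (hφ1.contDiffAt (hV.mem_nhds hPV)).differentiableAt one_ne_zero
  have hC2 : ContDiffOn ℝ 2 φ W := hφ2.mono hWΩ
  rcases ((convex_disc c ρ).inter (convex_ball P ε)).isPreconnected.mapsTo_Ioi_or_Iio
    hC2.continuousOn hne with hpos | hneg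
  · refine fderiv_ne_zero_of_superharmonic_pos hρ hPc hε hφP hdiff hC2 (fun x hx => ?_) hpos
    linarith [heq x (hWΩ hx), mul_nonneg hlam (hpos hx).le]
  · have := fderiv_ne_zero_of_superharmonic_pos (ψ := fun x => -φ x) hρ hPc hε (by simp [hφP])
      hdiff.neg hC2.neg (fun x hx => ?_) fun x hx => neg_pos.2 (hneg hx)
    · rwa [fderiv_fun_neg, neg_ne_zero] at this
    rw [lap_neg]
    linarith [heq x (hWΩ hx), mul_nonpos_of_nonneg_of_nonpos hlam (hneg hx).le]

theorem hopf_nonzero_derivative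
    (Ω : Set (ℝ × ℝ)) (hΩ : IsOpen Ω) (hΩbd : Bornology.IsBounded Ω)
    (lam : ℝ) (hlam : 0 ≤ lam)
    (P : ℝ × ℝ) (hP : P ∈ frontier Ω) (hball : InteriorBall Ω P)
    (φ : ℝ × ℝ → ℝ)
    (V : Set (ℝ × ℝ)) (hV : IsOpen V) (hPV : P ∈ V) (hφ1 : ContDiffOn ℝ 1 φ V)
    (hφ2 : ContDiffOn ℝ 2 φ Ω)
    (heq : ∀ x ∈ Ω, lap φ x + lam * φ x = 0)
    (hφP : φ P = 0)
    (hnod : P ∉ closure {x ∈ Ω | φ x = 0}) :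
    fderiv ℝ φ P ≠ 0 :=
  hopf_nonzero_derivative_general Ω lam hlam P hball φ V hV hPV hφ1 hφ2 heq hφP hnod
end

section
/- Let Ω̃ ⊆ ℝ² be open and bounded, symmetric under the reflection σ(r,θ) = (r,−θ), and convex in θ, meaning that for every r ∈ ℝ the slice {θ ∈ ℝ : (r,θ) ∈ Ω̃} is a convex set. Let u : ℝ² → ℝ be continuous on the closure of Ω̃, with u = 0 on ∂Ω̃, even in θ (u(r,−θ) = u(r,θ) for all (r,θ) in the closure of Ω̃), differentiable at every point of Ω̃, and such that ∂u/∂θ(r,θ) ≥ 0 for every (r,θ) ∈ Ω̃ with θ < 0. Then u ≥ 0 on the closure of Ω̃. Consequently, if instead u is as above except that u attains a strictly negative value on Ω̃, then there exists (r,θ) ∈ Ω̃ with θ < 0 and ∂u/∂θ(r,θ) < 0. -/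
open Set

section Order

variable {α : Type*} [ConditionallyCompleteLinearOrder α] {s : Set α}

theorem IsOpen.csInf_notMem [TopologicalSpace α] [OrderTopology α] [DenselyOrdered α]
    [NoMinOrder α] (hs : IsOpen s) (hbdd : BddBelow s) : sInf s ∉ s := by
  intro hmem
  obtain ⟨l, hl, hIoc⟩ := exists_Ioc_subset_of_mem_nhds (hs.mem_nhds hmem) (exists_lt (sInf s))
  obtain ⟨b, hlb, hb⟩ := exists_between hl
  exact (csInf_le hbdd (hIoc ⟨hlb, hb.le⟩)).not_gt hb

theorem Set.OrdConnected.Ioc_csInf_subset (hs : s.OrdConnected) {b : α} (hb : b ∈ s) :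
    Ioc (sInf s) b ⊆ s := by
  intro t ht
  obtain ⟨a, has, hat⟩ := exists_lt_of_csInf_lt ⟨b, hb⟩ ht.1
  exact hs.out has hb ⟨hat.le, ht.2⟩

end Order

theorem hasDerivAt_pd2 {u : ℝ × ℝ → ℝ} {r t : ℝ} (hu : DifferentiableAt ℝ u (r, t)) :
    HasDerivAt (fun s => u (r, s)) (pd2 u (r, t)) t :=
  hu.hasFDerivAt.comp_hasDerivAt t ((hasDerivAt_const t r).prodMk (hasDerivAt_id t))

theorem le_of_pd2_nonneg {u : ℝ × ℝ → ℝ} {r c θ : ℝ} (hcθ : c ≤ θ)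
    (hcont : ContinuousOn (fun t => u (r, t)) (Icc c θ))
    (hdiff : ∀ t ∈ Ioo c θ, DifferentiableAt ℝ u (r, t))
    (hpd2 : ∀ t ∈ Ioo c θ, 0 ≤ pd2 u (r, t)) : u (r, c) ≤ u (r, θ) := by
  have hmono : MonotoneOn (fun t => u (r, t)) (Icc c θ) := by
    refine monotoneOn_of_deriv_nonneg (convex_Icc c θ) hcont ?_ ?_ <;> rw [interior_Icc]
    · exact fun t ht => (hasDerivAt_pd2 (hdiff t ht)).differentiableAt.differentiableWithinAt
    · intro t ht
      rw [(hasDerivAt_pd2 (hdiff t ht)).deriv]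
      exact hpd2 t ht
  exact hmono (left_mem_Icc.2 hcθ) (right_mem_Icc.2 hcθ) hcθ

section Domain

variable {Ω : Set (ℝ × ℝ)}

theorem mem_closure_reflect (hsym : ∀ p : ℝ × ℝ, p ∈ Ω ↔ (p.1, -p.2) ∈ Ω) {p : ℝ × ℝ}
    (hp : p ∈ closure Ω) : (p.1, -p.2) ∈ closure Ω :=
  map_mem_closure (f := fun q : ℝ × ℝ => (q.1, -q.2)) (by fun_prop) hp fun q hq => (hsym q).1 hq

theorem exists_frontier_below (hΩ : IsOpen Ω) (hΩbd : Bornology.IsBounded Ω)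
    (hconv : ∀ r : ℝ, Convex ℝ {θ : ℝ | (r, θ) ∈ Ω}) {r θ : ℝ} (hp : (r, θ) ∈ Ω) :
    ∃ c < θ, (r, c) ∈ frontier Ω ∧ ∀ t ∈ Ioc c θ, (r, t) ∈ Ω := by
  set S : Set ℝ := {t | (r, t) ∈ Ω}
  have hline : Continuous fun t : ℝ => (r, t) := continuous_const.prodMk continuous_id
  have hSopen : IsOpen S := hΩ.preimage hline
  have hSbdd : BddBelow S := hΩbd.image_snd.bddBelow.mono
    (show S ⊆ Prod.snd '' Ω from fun t ht => ⟨(r, t), ht, rfl⟩)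
  have hnotMem : sInf S ∉ S := hSopen.csInf_notMem hSbdd
  refine ⟨sInf S, (csInf_le hSbdd hp).lt_of_ne fun h => hnotMem (h ▸ hp), ?_,
    (hconv r).ordConnected.Ioc_csInf_subset hp⟩
  rw [hΩ.frontier_eq]
  exact ⟨hline.closure_preimage_subset Ω (csInf_mem_closure ⟨θ, hp⟩ hSbdd), hnotMem⟩

theorem nonneg_of_snd_nonpos (hΩ : IsOpen Ω) (hΩbd : Bornology.IsBounded Ω)
    (hconv : ∀ r : ℝ, Convex ℝ {θ : ℝ | (r, θ) ∈ Ω}) {u : ℝ × ℝ → ℝ}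
    (hcont : ContinuousOn u (closure Ω)) (hzero : ∀ p ∈ frontier Ω, u p = 0)
    (hdiff : ∀ p ∈ Ω, DifferentiableAt ℝ u p) (hpd2 : ∀ p ∈ Ω, p.2 < 0 → 0 ≤ pd2 u p)
    {p : ℝ × ℝ} (hp : p ∈ closure Ω) (hp2 : p.2 ≤ 0) : 0 ≤ u p := by
  obtain ⟨r, θ⟩ := p
  by_cases hpΩ : (r, θ) ∈ Ω
  · obtain ⟨c, hcθ, hc, hseg⟩ := exists_frontier_below hΩ hΩbd hconv hpΩ
    have hmaps : MapsTo (fun t => (r, t)) (Icc c θ) (closure Ω) := fun t ht =>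
      ht.1.eq_or_lt.elim (fun h => h ▸ frontier_subset_closure hc)
        fun h => subset_closure (hseg t ⟨h, ht.2⟩)
    calc 0 = u (r, c) := (hzero _ hc).symm
      _ ≤ u (r, θ) :=
        le_of_pd2_nonneg hcθ.le (hcont.comp (by fun_prop) hmaps)
          (fun t ht => hdiff _ (hseg t ⟨ht.1, ht.2.le⟩))
          fun t ht => hpd2 _ (hseg t ⟨ht.1, ht.2.le⟩) (ht.2.trans_le hp2)
  · exact (hzero _ (hΩ.frontier_eq ▸ ⟨hp, hpΩ⟩)).symm.le

theorem nonneg_of_pd2_nonneg (hΩ : IsOpen Ω) (hΩbd : Bornology.IsBounded Ω)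
    (hsym : ∀ p : ℝ × ℝ, p ∈ Ω ↔ (p.1, -p.2) ∈ Ω)
    (hconv : ∀ r : ℝ, Convex ℝ {θ : ℝ | (r, θ) ∈ Ω}) {u : ℝ × ℝ → ℝ}
    (hcont : ContinuousOn u (closure Ω)) (hzero : ∀ p ∈ frontier Ω, u p = 0)
    (heven : ∀ p ∈ closure Ω, u (p.1, -p.2) = u p)
    (hdiff : ∀ p ∈ Ω, DifferentiableAt ℝ u p) (hpd2 : ∀ p ∈ Ω, p.2 < 0 → 0 ≤ pd2 u p)
    {p : ℝ × ℝ} (hp : p ∈ closure Ω) : 0 ≤ u p := by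
  rcases le_or_gt p.2 0 with hp2 | hp2
  · exact nonneg_of_snd_nonpos hΩ hΩbd hconv hcont hzero hdiff hpd2 hp hp2
  · rw [← heven p hp]
    exact nonneg_of_snd_nonpos hΩ hΩbd hconv hcont hzero hdiff hpd2
      (mem_closure_reflect hsym hp) (neg_nonpos.2 hp2.le)

end Domain

theorem even_monotone_nonnegative_and_consequence
    (Ω : Set (ℝ × ℝ)) (hΩ : IsOpen Ω) (hΩbd : Bornology.IsBounded Ω)
    (hsym : ∀ p : ℝ × ℝ, p ∈ Ω ↔ (p.1, -p.2) ∈ Ω)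
    (hconv : ∀ r : ℝ, Convex ℝ {θ : ℝ | (r, θ) ∈ Ω}) :
    -- main claim: u ≥ 0 on the closure of Ω
    (∀ u : ℝ × ℝ → ℝ,
      ContinuousOn u (closure Ω) →
      (∀ p ∈ frontier Ω, u p = 0) →
      (∀ p ∈ closure Ω, u (p.1, -p.2) = u p) →
      (∀ p ∈ Ω, DifferentiableAt ℝ u p) →
      (∀ p ∈ Ω, p.2 < 0 → 0 ≤ pd2 u p) →
      ∀ p ∈ closure Ω, 0 ≤ u p) ∧
    -- consequence: if u takes a negative value, ∂u/∂θ is somewhere negative for θ < 0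
    (∀ u : ℝ × ℝ → ℝ,
      ContinuousOn u (closure Ω) →
      (∀ p ∈ frontier Ω, u p = 0) →
      (∀ p ∈ closure Ω, u (p.1, -p.2) = u p) →
      (∀ p ∈ Ω, DifferentiableAt ℝ u p) →
      (∃ p ∈ Ω, u p < 0) →
      ∃ p ∈ Ω, p.2 < 0 ∧ pd2 u p < 0) := by
  refine ⟨fun u hcont hzero heven hdiff hpd2 p hp =>
    nonneg_of_pd2_nonneg hΩ hΩbd hsym hconv hcont hzero heven hdiff hpd2 hp, ?_⟩
  rintro u hcont hzero heven hdiff ⟨p, hpΩ, hup⟩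
  by_contra! hpd2
  exact hup.not_ge <| nonneg_of_pd2_nonneg hΩ hΩbd hsym hconv hcont hzero heven hdiff hpd2
    (subset_closure hpΩ)
end
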